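/- For every k ≥ 1, every (k+1)-Bose-symmetric extendible quantum channel on d×d matrices is k-Bose-symmetric extendible. -/

import Mathlib

open Matrix Filter
open scoped Kronecker ComplexOrder

noncomputable section

/-- The positive semidefinite square root of a matrix, extended by `0` to all matrices. -/
noncomputable def msqrt {n : Type*} [Fintype n] [DecidableEq n] (A : Matrix n n ℂ) :
    Matrix n n ℂ :=
  open scoped Classical in
  if h : A.PosSemidef then
    h.1.eigenvectorUnitary.1 * diagonal ((↑) ∘ (√·) ∘ h.1.eigenvalues) *
      (star h.1.eigenvectorUnitary : Matrix n n ℂ)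
  else 0

/-- A density matrix: positive semidefinite with trace one. -/
def IsDensityMatrix {n : Type*} [Fintype n] [DecidableEq n] (ρ : Matrix n n ℂ) : Prop :=
  ρ.PosSemidef ∧ ρ.trace = 1

/-- The fidelity `F(ρ,σ) = Tr √(√ρ σ √ρ)` of two (density) matrices. -/
noncomputable def Fid {n : Type*} [Fintype n] [DecidableEq n] (ρ σ : Matrix n n ℂ) : ℝ :=
  ((msqrt (msqrt ρ * σ * msqrt ρ)).trace).re

/-- The trace distance `Δ(ρ,σ) = (1/2) Tr √((ρ-σ)† (ρ-σ))`. -/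
noncomputable def trDist {n : Type*} [Fintype n] [DecidableEq n] (ρ σ : Matrix n n ℂ) : ℝ :=
  (1 / 2) * ((msqrt ((ρ - σ)ᴴ * (ρ - σ))).trace).re

/-- A quantum channel: a linear map admitting a Kraus representation. -/
def IsQuantumChannel {m n : Type*} [Fintype m] [Fintype n] [DecidableEq m] [DecidableEq n]
    (Λ : Matrix m m ℂ →ₗ[ℂ] Matrix n n ℂ) : Prop :=
  ∃ (N : ℕ) (K : Fin N → Matrix n m ℂ),
    (∀ X, Λ X = ∑ i, K i * X * (K i)ᴴ) ∧ (∑ i, (K i)ᴴ * K i = 1)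

/-- The permutation matrix `P_π` on `(ℂ^d)^{⊗k}`. -/
def permMat (d k : ℕ) (π : Equiv.Perm (Fin k)) :
    Matrix (Fin k → Fin d) (Fin k → Fin d) ℂ :=
  Matrix.of fun f g => if f = g ∘ π then 1 else 0

/-- The orthogonal projector `Π⁺_k` onto the symmetric subspace of `(ℂ^d)^{⊗k}`. -/
noncomputable def symProj (d k : ℕ) : Matrix (Fin k → Fin d) (Fin k → Fin d) ℂ :=
  ((k.factorial : ℂ))⁻¹ • ∑ π : Equiv.Perm (Fin k), permMat d k π

/-- Combine a value for the first tensor factor with values for the remaining factors. -/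
def extendFirst {d k : ℕ} (a : Fin d) (h : {i : Fin k // (i : ℕ) ≠ 0} → Fin d) :
    Fin k → Fin d :=
  fun i => if hi : (i : ℕ) = 0 then a else h ⟨i, hi⟩

/-- The partial trace over the tensor factors `2,…,k` of a matrix on `(ℂ^d)^{⊗k}`. -/
noncomputable def ptrRest {d k : ℕ}
    (W : Matrix (Fin k → Fin d) (Fin k → Fin d) ℂ) : Matrix (Fin d) (Fin d) ℂ :=
  Matrix.of fun a a' =>
    ∑ h : {i : Fin k // (i : ℕ) ≠ 0} → Fin d, W (extendFirst a h) (extendFirst a' h)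

/-- A `k`-Bose-symmetric extendible channel on `d×d` matrices. -/
def IsBoseSymExtendible (d k : ℕ)
    (Λ : Matrix (Fin d) (Fin d) ℂ →ₗ[ℂ] Matrix (Fin d) (Fin d) ℂ) : Prop :=
  ∃ V : Matrix (Fin d) (Fin d) ℂ →ₗ[ℂ] Matrix (Fin k → Fin d) (Fin k → Fin d) ℂ,
    IsQuantumChannel V ∧ (∀ X, symProj d k * V X * symProj d k = V X) ∧
    (∀ X, Λ X = ptrRest (V X))

/-- An entanglement-breaking (measure-and-prepare) channel on `d×d` matrices. -/
def IsEBChannel (d : ℕ)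
    (Λ : Matrix (Fin d) (Fin d) ℂ →ₗ[ℂ] Matrix (Fin d) (Fin d) ℂ) : Prop :=
  ∃ (N : ℕ) (M : Fin N → Matrix (Fin d) (Fin d) ℂ) (β : Fin N → (Fin d → ℂ)),
    (∀ y, (M y).PosSemidef) ∧ (∑ y, M y = 1) ∧ (∀ y, star (β y) ⬝ᵥ β y = 1) ∧
    (∀ X, Λ X = ∑ y, ((M y * X).trace) • vecMulVec (β y) (star (β y)))

/-- `(id_A ⊗ Λ)[ρ]`: a map acting on the `B` tensor factor of a bipartite matrix. -/
noncomputable def idTensor {dA dB dB' : ℕ}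
    (Λ : Matrix (Fin dB) (Fin dB) ℂ →ₗ[ℂ] Matrix (Fin dB') (Fin dB') ℂ)
    (ρ : Matrix (Fin dA × Fin dB) (Fin dA × Fin dB) ℂ) :
    Matrix (Fin dA × Fin dB') (Fin dA × Fin dB') ℂ :=
  Matrix.of fun p q => Λ (Matrix.of fun b b' => ρ (p.1, b) (q.1, b')) p.2 q.2

/-- `(Γ ⊗ id_B)[ρ]`: a map acting on the `A` tensor factor of a bipartite matrix. -/
noncomputable def tensorId {dA dA' dB : ℕ}
    (Γ : Matrix (Fin dA) (Fin dA) ℂ →ₗ[ℂ] Matrix (Fin dA') (Fin dA') ℂ)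
    (ρ : Matrix (Fin dA × Fin dB) (Fin dA × Fin dB) ℂ) :
    Matrix (Fin dA' × Fin dB) (Fin dA' × Fin dB) ℂ :=
  Matrix.of fun p q => Γ (Matrix.of fun a a' => ρ (a, p.2) (a', q.2)) p.1 q.1

/-- Supremum of `F(ρ, (id ⊗ Λ)[ρ])` over `k`-Bose-symmetric extendible channels `Λ`. -/
noncomputable def symSup (dA dB k : ℕ)
    (ρ : Matrix (Fin dA × Fin dB) (Fin dA × Fin dB) ℂ) : ℝ :=
  sSup {x : ℝ | ∃ Λ, IsBoseSymExtendible dB k Λ ∧ x = Fid ρ (idTensor Λ ρ)}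

/-- Supremum of `F(ρ, (id ⊗ Λ)[ρ])` over entanglement-breaking channels `Λ`. -/
noncomputable def ebSup (dA dB : ℕ)
    (ρ : Matrix (Fin dA × Fin dB) (Fin dA × Fin dB) ℂ) : ℝ :=
  sSup {x : ℝ | ∃ Λ, IsEBChannel dB Λ ∧ x = Fid ρ (idTensor Λ ρ)}

/-- A quantum-classical bipartite state. -/
def IsQuantumClassical {dA dB : ℕ}
    (ρ : Matrix (Fin dA × Fin dB) (Fin dA × Fin dB) ℂ) : Prop :=
  ∃ (N : ℕ) (p : Fin N → ℝ) (σ : Fin N → Matrix (Fin dA) (Fin dA) ℂ)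
    (b : Fin N → (Fin dB → ℂ)),
    (∀ i, 0 ≤ p i) ∧ (∑ i, p i = 1) ∧ (∀ i, IsDensityMatrix (σ i)) ∧
    (∀ i j, star (b i) ⬝ᵥ b j = if i = j then 1 else 0) ∧
    ρ = ∑ i, (p i : ℂ) • (σ i ⊗ₖ vecMulVec (b i) (star (b i)))

/-- The Choi matrix `J(Λ) = ∑_{x,x'} |x⟩⟨x'| ⊗ Λ(|x⟩⟨x'|)`. -/
noncomputable def choiMatrix {d : ℕ} {Y : Type*} [Fintype Y] [DecidableEq Y]
    (Λ : Matrix (Fin d) (Fin d) ℂ →ₗ[ℂ] Matrix Y Y ℂ) :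
    Matrix (Fin d × Y) (Fin d × Y) ℂ :=
  Matrix.of fun p q => Λ (Matrix.single p.1 q.1 1) p.2 q.2

/-- A `k`-Bose-symmetric extension (on the output system) of a matrix on `ℂ^d ⊗ ℂ^d`. -/
def HasBoseSymExtension {d : ℕ} (k : ℕ)
    (W : Matrix (Fin d × Fin d) (Fin d × Fin d) ℂ) : Prop :=
  ∃ Wt : Matrix (Fin d × (Fin k → Fin d)) (Fin d × (Fin k → Fin d)) ℂ,
    Wt.PosSemidef ∧
    ((1 : Matrix (Fin d) (Fin d) ℂ) ⊗ₖ symProj d k) * Wt *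
        ((1 : Matrix (Fin d) (Fin d) ℂ) ⊗ₖ symProj d k) = Wt ∧
    (∀ x x' b b', W (x, b) (x', b') =
      ∑ h : {i : Fin k // (i : ℕ) ≠ 0} → Fin d,
        Wt (x, extendFirst b h) (x', extendFirst b' h))

/-- The `k`-fold tensor power of a vector in `ℂ^d`. -/
def vecPow {d : ℕ} (k : ℕ) (v : Fin d → ℂ) : (Fin k → Fin d) → ℂ :=
  fun f => ∏ i, v (f i)

end


namespace Stmt6Aux

open Matrix

variable {d k : ℕ}

lemma comp_eq_iff (π : Equiv.Perm (Fin k)) (f h : Fin k → Fin d) :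
    (f = h ∘ ⇑π) ↔ h = f ∘ ⇑π⁻¹ := by
  constructor
  · rintro rfl; funext x; simp
  · rintro rfl; funext x; simp

lemma permMat_mul_apply (π : Equiv.Perm (Fin k)) (M : Matrix (Fin k → Fin d) (Fin k → Fin d) ℂ)
    (f g : Fin k → Fin d) : (permMat d k π * M) f g = M (f ∘ ⇑π⁻¹) g := by
  simp only [Matrix.mul_apply, permMat, Matrix.of_apply]
  rw [Finset.sum_eq_single (f ∘ ⇑π⁻¹)]
  · rw [if_pos, one_mul]
    funext x; simp
  · intro h _ hne
    rw [if_neg, zero_mul]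
    intro hc
    exact hne (by rw [hc]; funext x; simp)
  · intro habs; exact absurd (Finset.mem_univ _) habs

lemma mul_permMat_apply (π : Equiv.Perm (Fin k)) (M : Matrix (Fin k → Fin d) (Fin k → Fin d) ℂ)
    (f g : Fin k → Fin d) : (M * permMat d k π) f g = M f (g ∘ ⇑π) := by
  simp only [Matrix.mul_apply, permMat, Matrix.of_apply]
  simp_rw [mul_ite, mul_one, mul_zero]
  simp only [Finset.sum_ite_eq', Finset.mem_univ, if_true]

lemma permMat_mul_permMat (σ π : Equiv.Perm (Fin k)) :
    permMat d k σ * permMat d k π = permMat d k (π * σ) := by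
  ext f g
  rw [permMat_mul_apply]
  simp only [permMat, Matrix.of_apply]
  congr 1
  refine propext ⟨fun hc => ?_, fun hc => ?_⟩
  · funext x
    have := congrFun hc (σ x)
    simpa using this
  · funext x
    have := congrFun hc (σ⁻¹ x)
    simpa using this

lemma permMat_mul_symProj (σ : Equiv.Perm (Fin k)) :
    permMat d k σ * symProj d k = symProj d k := by
  simp only [symProj, Matrix.mul_smul]
  congr 1
  rw [Finset.mul_sum]
  simp_rw [permMat_mul_permMat]
  exact Fintype.sum_equiv (Equiv.mulRight σ) _ _ (fun π => rfl)

lemma symProj_mul_permMat (σ : Equiv.Perm (Fin k)) :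
    symProj d k * permMat d k σ = symProj d k := by
  simp only [symProj, Matrix.smul_mul]
  congr 1
  rw [Finset.sum_mul]
  simp_rw [permMat_mul_permMat]
  exact Fintype.sum_equiv (Equiv.mulLeft σ) _ _ (fun π => rfl)

lemma perm_left_of_sym {W : Matrix (Fin k → Fin d) (Fin k → Fin d) ℂ}
    (hs : symProj d k * W * symProj d k = W) (σ : Equiv.Perm (Fin k)) :
    permMat d k σ * W = W := by
  conv_lhs => rw [← hs]
  rw [← Matrix.mul_assoc, ← Matrix.mul_assoc, permMat_mul_symProj]
  exact hs

lemma perm_right_of_sym {W : Matrix (Fin k → Fin d) (Fin k → Fin d) ℂ}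
    (hs : symProj d k * W * symProj d k = W) (σ : Equiv.Perm (Fin k)) :
    W * permMat d k σ = W := by
  conv_lhs => rw [← hs]
  rw [Matrix.mul_assoc (symProj d k * W), symProj_mul_permMat]
  exact hs

lemma sym_apply_comp_left {W : Matrix (Fin k → Fin d) (Fin k → Fin d) ℂ}
    (hs : symProj d k * W * symProj d k = W) (σ : Equiv.Perm (Fin k))
    (f g : Fin k → Fin d) : W (f ∘ ⇑σ) g = W f g := by
  have h1 := perm_left_of_sym hs σ⁻¹
  have h2 : (permMat d k σ⁻¹ * W) f g = W (f ∘ ⇑σ) g := by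
    rw [permMat_mul_apply]; simp
  rw [← h2, h1]

lemma sym_apply_comp_right {W : Matrix (Fin k → Fin d) (Fin k → Fin d) ℂ}
    (hs : symProj d k * W * symProj d k = W) (σ : Equiv.Perm (Fin k))
    (f g : Fin k → Fin d) : W f (g ∘ ⇑σ) = W f g := by
  have h1 := perm_right_of_sym hs σ
  have h2 : (W * permMat d k σ) f g = W f (g ∘ ⇑σ) := by
    rw [mul_permMat_apply]
  rw [← h2, h1]

lemma symProj_mul_of (M : Matrix (Fin k → Fin d) (Fin k → Fin d) ℂ)
    (h : ∀ π : Equiv.Perm (Fin k), permMat d k π * M = M) : symProj d k * M = M := by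
  simp only [symProj, Matrix.smul_mul]
  rw [Finset.sum_mul]
  simp_rw [h]
  rw [Finset.sum_const, Finset.card_univ, Fintype.card_perm, Fintype.card_fin,
    ← Nat.cast_smul_eq_nsmul ℂ, smul_smul, inv_mul_cancel₀, one_smul]
  exact_mod_cast Nat.factorial_ne_zero k

lemma mul_symProj_of (M : Matrix (Fin k → Fin d) (Fin k → Fin d) ℂ)
    (h : ∀ π : Equiv.Perm (Fin k), M * permMat d k π = M) : M * symProj d k = M := by
  simp only [symProj, Matrix.mul_smul]
  rw [Finset.mul_sum]
  simp_rw [h]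
  rw [Finset.sum_const, Finset.card_univ, Fintype.card_perm, Fintype.card_fin,
    ← Nat.cast_smul_eq_nsmul ℂ, smul_smul, inv_mul_cancel₀, one_smul]
  exact_mod_cast Nat.factorial_ne_zero k

/-- Extend a permutation of `Fin k` to `Fin (k+1)` fixing the last element. -/
def extPerm (π : Equiv.Perm (Fin k)) : Equiv.Perm (Fin (k + 1)) where
  toFun := Fin.lastCases (Fin.last k) (fun j => (π j).castSucc)
  invFun := Fin.lastCases (Fin.last k) (fun j => (π⁻¹ j).castSucc)
  left_inv i := by
    induction i using Fin.lastCases with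
    | last => simp
    | cast j => simp
  right_inv i := by
    induction i using Fin.lastCases with
    | last => simp
    | cast j => simp

lemma snoc_comp_extPerm (π : Equiv.Perm (Fin k)) (f : Fin k → Fin d) (x : Fin d) :
    (Fin.snoc f x : Fin (k + 1) → Fin d) ∘ ⇑(extPerm π) = Fin.snoc (f ∘ ⇑π) x := by
  funext i
  induction i using Fin.lastCases with
  | last => simp [extPerm]
  | cast j => simp [extPerm]

/-- Partial trace over the last tensor factor, as a linear map. -/
noncomputable def trLast : Matrix (Fin (k + 1) → Fin d) (Fin (k + 1) → Fin d) ℂ →ₗ[ℂ]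
    Matrix (Fin k → Fin d) (Fin k → Fin d) ℂ where
  toFun W := Matrix.of fun f g => ∑ x : Fin d, W (Fin.snoc f x) (Fin.snoc g x)
  map_add' W₁ W₂ := by
    ext f g
    simp [Finset.sum_add_distrib]
  map_smul' c W := by
    ext f g
    simp [Finset.mul_sum]

lemma trLast_apply (W : Matrix (Fin (k + 1) → Fin d) (Fin (k + 1) → Fin d) ℂ)
    (f g : Fin k → Fin d) :
    trLast W f g = ∑ x : Fin d, W (Fin.snoc f x) (Fin.snoc g x) := rfl

lemma symProj_trLast {W : Matrix (Fin (k + 1) → Fin d) (Fin (k + 1) → Fin d) ℂ}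
    (hs : symProj d (k + 1) * W * symProj d (k + 1) = W) :
    symProj d k * trLast W * symProj d k = trLast W := by
  have hleft : ∀ π : Equiv.Perm (Fin k), permMat d k π * trLast W = trLast W := by
    intro π
    ext f g
    rw [permMat_mul_apply, trLast_apply, trLast_apply]
    refine Finset.sum_congr rfl fun x _ => ?_
    have h1 : (Fin.snoc (f ∘ ⇑π⁻¹) x : Fin (k + 1) → Fin d)
        = (Fin.snoc f x : Fin (k + 1) → Fin d) ∘ ⇑(extPerm π⁻¹) := (snoc_comp_extPerm _ _ _).symm
    rw [h1, sym_apply_comp_left hs]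
  have hright : ∀ π : Equiv.Perm (Fin k), trLast W * permMat d k π = trLast W := by
    intro π
    ext f g
    rw [mul_permMat_apply, trLast_apply, trLast_apply]
    refine Finset.sum_congr rfl fun x _ => ?_
    have h1 : (Fin.snoc (g ∘ ⇑π) x : Fin (k + 1) → Fin d)
        = (Fin.snoc g x : Fin (k + 1) → Fin d) ∘ ⇑(extPerm π) := (snoc_comp_extPerm _ _ _).symm
    rw [h1, sym_apply_comp_right hs]
  rw [symProj_mul_of _ hleft, mul_symProj_of _ hright]

/-- The equivalence combining the "rest" indices of `Fin k` with the last index. -/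
def restEquiv (hk : 1 ≤ k) :
    (({i : Fin k // (i : ℕ) ≠ 0} → Fin d) × Fin d) ≃ ({i : Fin (k + 1) // (i : ℕ) ≠ 0} → Fin d) where
  toFun p i := if hl : i.1 = Fin.last k then p.2
    else p.1 ⟨i.1.castPred hl, by simpa using i.2⟩
  invFun h := (fun j => h ⟨j.1.castSucc, by simpa using j.2⟩,
    h ⟨Fin.last k, by simp; omega⟩)
  left_inv p := by
    refine Prod.ext ?_ ?_
    · funext j
      simp only
      rw [dif_neg (Fin.castSucc_lt_last j.1).ne]
      exact congrArg p.1 (Subtype.ext (by simp))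
    · simp
  right_inv h := by
    funext i
    by_cases hl : i.1 = Fin.last k
    · simp only [dif_pos hl]
      exact congrArg h (Subtype.ext hl.symm)
    · simp only [dif_neg hl]
      exact congrArg h (Subtype.ext (Fin.castSucc_castPred i.1 hl))

lemma extendFirst_restEquiv (hk : 1 ≤ k) (a : Fin d)
    (h : {i : Fin k // (i : ℕ) ≠ 0} → Fin d) (x : Fin d) :
    extendFirst a (restEquiv hk (h, x)) = Fin.snoc (extendFirst a h) x := by
  funext i
  induction i using Fin.lastCases with
  | last =>
    have hne : ((Fin.last k : Fin (k + 1)) : ℕ) ≠ 0 := by simp; omega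
    simp only [extendFirst, dif_neg hne, Fin.snoc_last]
    simp [restEquiv]
  | cast j =>
    simp only [extendFirst, Fin.snoc_castSucc, Fin.coe_castSucc]
    by_cases hj : (j : ℕ) = 0
    · simp [hj]
    · rw [dif_neg hj, dif_neg hj]
      simp only [restEquiv, Equiv.coe_fn_mk]
      rw [dif_neg (Fin.castSucc_lt_last j).ne]
      exact congrArg h (Subtype.ext (by simp))

lemma ptrRest_trLast (hk : 1 ≤ k)
    (W : Matrix (Fin (k + 1) → Fin d) (Fin (k + 1) → Fin d) ℂ) :
    ptrRest (trLast W) = ptrRest W := by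
  ext a a'
  show ∑ h : {i : Fin k // (i : ℕ) ≠ 0} → Fin d, trLast W (extendFirst a h) (extendFirst a' h)
      = ∑ h : {i : Fin (k + 1) // (i : ℕ) ≠ 0} → Fin d, W (extendFirst a h) (extendFirst a' h)
  rw [← Equiv.sum_comp (restEquiv (d := d) hk)
    (fun h' => W (extendFirst a h') (extendFirst a' h')), Fintype.sum_prod_type]
  refine Finset.sum_congr rfl fun h _ => ?_
  rw [trLast_apply]
  refine Finset.sum_congr rfl fun x _ => ?_
  simp only [extendFirst_restEquiv hk]

/-- The Kraus operator tracing out the last factor. -/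
def trOp (x : Fin d) : Matrix (Fin k → Fin d) (Fin (k + 1) → Fin d) ℂ :=
  Matrix.of fun f g => if g = Fin.snoc f x then 1 else 0

lemma trOp_mul_apply (x : Fin d) (W : Matrix (Fin (k + 1) → Fin d) (Fin (k + 1) → Fin d) ℂ)
    (f : Fin k → Fin d) (g : Fin (k + 1) → Fin d) :
    (trOp (k := k) x * W) f g = W (Fin.snoc f x) g := by
  simp only [Matrix.mul_apply, trOp, Matrix.of_apply, ite_mul, one_mul, zero_mul]
  simp only [Finset.sum_ite_eq', Finset.mem_univ, if_true]

lemma trOp_conj (x : Fin d) (W : Matrix (Fin (k + 1) → Fin d) (Fin (k + 1) → Fin d) ℂ)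
    (f g : Fin k → Fin d) :
    (trOp (k := k) x * W * (trOp (k := k) x)ᴴ) f g = W (Fin.snoc f x) (Fin.snoc g x) := by
  rw [Matrix.mul_apply]
  simp_rw [trOp_mul_apply, Matrix.conjTranspose_apply, trOp, Matrix.of_apply, apply_ite star,
    star_one, star_zero, mul_ite, mul_one, mul_zero]
  simp only [Finset.sum_ite_eq', Finset.mem_univ, if_true]

lemma trLast_eq_sum (W : Matrix (Fin (k + 1) → Fin d) (Fin (k + 1) → Fin d) ℂ) :
    trLast W = ∑ x : Fin d, trOp (k := k) x * W * (trOp (k := k) x)ᴴ := by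
  ext f g
  rw [trLast_apply]
  rw [Matrix.sum_apply]
  refine Finset.sum_congr rfl fun x _ => (trOp_conj x W f g).symm

/-- The equivalence `Fin d × (Fin k → Fin d) ≃ (Fin (k+1) → Fin d)` via `snoc`. -/
def snocEq : (Fin d × (Fin k → Fin d)) ≃ (Fin (k + 1) → Fin d) where
  toFun p := Fin.snoc p.2 p.1
  invFun h := (h (Fin.last k), Fin.init h)
  left_inv p := by
    refine Prod.ext ?_ ?_
    · simp
    · simp
  right_inv h := Fin.snoc_init_self h

lemma sum_trOp : (∑ x : Fin d, (trOp (d := d) (k := k) x)ᴴ * trOp x :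
    Matrix (Fin (k + 1) → Fin d) (Fin (k + 1) → Fin d) ℂ) = 1 := by
  ext g' g''
  rw [Matrix.sum_apply]
  calc ∑ x : Fin d, ((trOp (d := d) (k := k) x)ᴴ * trOp (d := d) (k := k) x) g' g''
      = ∑ x : Fin d, ∑ f : Fin k → Fin d,
          (if g' = Fin.snoc f x then (if g'' = Fin.snoc f x then (1 : ℂ) else 0) else 0) := by
        refine Finset.sum_congr rfl fun x _ => ?_
        simp only [Matrix.mul_apply, Matrix.conjTranspose_apply, trOp, Matrix.of_apply]
        refine Finset.sum_congr rfl fun f _ => ?_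
        by_cases h1 : g' = Fin.snoc f x <;> by_cases h2 : g'' = Fin.snoc f x <;>
          simp [h1, h2]
    _ = ∑ h : Fin (k + 1) → Fin d,
          (if g' = h then (if g'' = h then (1 : ℂ) else 0) else 0) := by
        rw [← Equiv.sum_comp (snocEq (d := d) (k := k))
          (fun h => (if g' = h then (if g'' = h then (1 : ℂ) else 0) else 0)),
          Fintype.sum_prod_type]
        rfl
    _ = (1 : Matrix (Fin (k + 1) → Fin d) (Fin (k + 1) → Fin d) ℂ) g' g'' := by
        simp only [Finset.sum_ite_eq, Finset.mem_univ, if_true]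
        by_cases hgg : g' = g''
        · subst hgg; simp [Matrix.one_apply]
        · simp [Matrix.one_apply, hgg, Ne.symm hgg]

end Stmt6Aux

/-- For k ≥ 1, every (k+1)-Bose-symmetric extendible quantum channel is
k-Bose-symmetric extendible. -/
theorem stmt6 {d k : ℕ} (hk : 1 ≤ k)
    (Λ : Matrix (Fin d) (Fin d) ℂ →ₗ[ℂ] Matrix (Fin d) (Fin d) ℂ)
    (hΛ : IsQuantumChannel Λ)
    (h : IsBoseSymExtendible d (k + 1) Λ) :
    IsBoseSymExtendible d k Λ := by
  obtain ⟨V, ⟨N, L, hVK, hVsum⟩, hVsym, hVtr⟩ := h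
  refine ⟨Stmt6Aux.trLast ∘ₗ V, ?_, ?_, ?_⟩
  · refine ⟨d * N, fun j => Stmt6Aux.trOp (k := k) (finProdFinEquiv.symm j).1 * L (finProdFinEquiv.symm j).2,
      ?_, ?_⟩
    · intro X
      show Stmt6Aux.trLast (V X) = _
      rw [Stmt6Aux.trLast_eq_sum, ← Equiv.sum_comp (finProdFinEquiv (m := d) (n := N))]
      rw [Fintype.sum_prod_type]
      simp only [Equiv.symm_apply_apply]
      refine Finset.sum_congr rfl fun x _ => ?_
      rw [hVK, Matrix.mul_sum, Matrix.sum_mul]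
      refine Finset.sum_congr rfl fun i _ => ?_
      rw [Matrix.conjTranspose_mul]
      simp only [Matrix.mul_assoc]
    · rw [← Equiv.sum_comp (finProdFinEquiv (m := d) (n := N))]
      simp only [Equiv.symm_apply_apply]
      rw [Fintype.sum_prod_type]
      rw [Finset.sum_comm]
      have : ∀ i : Fin N, ∑ x : Fin d,
          (Stmt6Aux.trOp (k := k) x * L i)ᴴ * (Stmt6Aux.trOp (k := k) x * L i) = (L i)ᴴ * L i := by
        intro i
        have : ∀ x : Fin d, (Stmt6Aux.trOp (k := k) x * L i)ᴴ * (Stmt6Aux.trOp (k := k) x * L i)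
            = (L i)ᴴ * ((Stmt6Aux.trOp (k := k) x)ᴴ * Stmt6Aux.trOp (k := k) x) * L i := by
          intro x; rw [Matrix.conjTranspose_mul]; simp only [Matrix.mul_assoc]
        simp_rw [this]
        rw [← Matrix.sum_mul, ← Matrix.mul_sum]
        erw [Stmt6Aux.sum_trOp]
        rw [Matrix.mul_one]
      simp_rw [this]
      exact hVsum
  · intro X
    exact Stmt6Aux.symProj_trLast (hVsym X)
  · intro X
    show Λ X = ptrRest (Stmt6Aux.trLast (V X))
    rw [Stmt6Aux.ptrRest_trLast hk, ← hVtr X]
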